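/- arXiv:2604.28026 — 4 statements merged into one kernel-verified Lean document; each statement's English description precedes it below -/
import Mathlib

section
/- Fix U > 0 and f : ℕ₀×ℕ₀ → [0,∞) satisfying: the counting function N(T) = #{(m,n) ∈ ℕ² : U(m+n)+f(m,n) ≤ T} satisfies N(T) ≤ K T^α for some K > 0 and α ∈ [0,1). Let Z_sing(β) = Σ_{n≥1} e^{-βUn}, Z_dim(β) = Σ_{m,n≥1} e^{-βU(m+n)-βf(m,n)}, and Δ(β) = (1/β) log(Z_sing(β)²/Z_dim(β)). Then there exist β₀ > 0 and a constant C₀ such that for all β ∈ (0,β₀): Δ(β) ≥ (2-α)|log β|/β - C₀/β. In particular, for any C ∈ (1, 2-α) and β sufficiently small, Δ(β) ≥ C|log β|/β. -/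
/-!
`Z_sing` is a geometric series, hence at least `1 / (3βU)` once `βU ≤ 1`. For `Z_dim`, sort the
pairs by the integer part `j` of `β E`, where `E(m, n) = U(m + n) + f(m, n)`: such a pair has
weight at most `e^{-j}`, and there are at most `N((j + 1)/β) ≤ K β^{-α} (j + 1)^α ≤ K β^{-α} 2^j`
of them, so `Z_dim ≤ 4 K β^{-α}` because `2/e < 3/4`. Therefore
`Z_sing² / Z_dim ≥ β^{α-2} / (36 U² K)`, which is the first bound after taking logarithms; the
second follows because `|log β| → ∞` as `β → 0⁺`.
-/

open Real Set Filter Topology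

lemma ofReal_exp_neg_le_tsum_indicator {t : ℝ} (ht : 0 ≤ t) :
    ENNReal.ofReal (exp (-t)) ≤
      ∑' j : ℕ, (Iic ((j : ℝ) + 1)).indicator (fun _ => ENNReal.ofReal (exp (-j))) t := by
  refine le_trans ?_ (ENNReal.le_tsum ⌊t⌋₊)
  rw [indicator_of_mem (mem_Iic.2 (Nat.lt_floor_add_one t).le)]
  exact ENNReal.ofReal_le_ofReal (exp_le_exp.2 (neg_le_neg (Nat.floor_le ht)))

lemma tsum_ofReal_exp_neg_le_tsum_encard {ι : Type*} (E : ι → ℝ) (hE : ∀ i, 0 ≤ E i) :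
    ∑' i, ENNReal.ofReal (exp (-E i)) ≤
      ∑' j : ℕ, {i | E i ≤ (j : ℝ) + 1}.encard * ENNReal.ofReal (exp (-j)) :=
  calc ∑' i, ENNReal.ofReal (exp (-E i))
      ≤ ∑' i, ∑' j : ℕ,
          (Iic ((j : ℝ) + 1)).indicator (fun _ => ENNReal.ofReal (exp (-j))) (E i) :=
        ENNReal.tsum_le_tsum fun i => ofReal_exp_neg_le_tsum_indicator (hE i)
    _ = ∑' j : ℕ, ∑' i,
          {i | E i ≤ (j : ℝ) + 1}.indicator (fun _ => ENNReal.ofReal (exp (-j))) i :=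
        ENNReal.tsum_comm
    _ = _ := by simp only [← tsum_subtype, ENNReal.tsum_set_const]

lemma exp_neg_mul_rpow_le {α : ℝ} (hα : α ≤ 1) (j : ℕ) :
    exp (-j) * ((j : ℝ) + 1) ^ α ≤ (2 * exp (-1)) ^ j := by
  have hpow : ((j : ℝ) + 1) ^ α ≤ 2 ^ j :=
    calc ((j : ℝ) + 1) ^ α ≤ ((j : ℝ) + 1) ^ (1 : ℝ) :=
          rpow_le_rpow_of_exponent_le (by simp) hα
      _ = ((j + 1 : ℕ) : ℝ) := by push_cast; exact rpow_one _
      _ ≤ 2 ^ j := by exact_mod_cast Nat.lt_two_pow_self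
  rw [mul_pow, ← exp_nat_mul, mul_neg_one, mul_comm]
  exact mul_le_mul_of_nonneg_right hpow (exp_pos _).le

lemma two_mul_exp_neg_one_lt : 2 * exp (-1) < 3 / 4 := by
  linarith [exp_neg_one_lt_d9]

lemma tsum_two_mul_exp_neg_one_pow_le : ∑' j : ℕ, (2 * exp (-1)) ^ j ≤ 4 := by
  have h := two_mul_exp_neg_one_lt
  rw [tsum_geometric_of_lt_one (by positivity) (by linarith),
    inv_le_comm₀ (by linarith) (by norm_num)]
  linarith

lemma tsum_ofReal_exp_neg_le {ι : Type*} (E : ι → ℝ) (hE : ∀ i, 0 ≤ E i) {M α : ℝ}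
    (hM : 0 ≤ M) (hα : α ≤ 1) (hfin : ∀ T, {i | E i ≤ T}.Finite)
    (hN : ∀ T, 0 < T → ({i | E i ≤ T}.ncard : ℝ) ≤ M * T ^ α) :
    ∑' i, ENNReal.ofReal (exp (-E i)) ≤ ENNReal.ofReal (4 * M) := by
  have hr : 0 ≤ 2 * exp (-1) := by positivity
  have hsum : Summable fun j : ℕ => M * (2 * exp (-1)) ^ j :=
    (summable_geometric_of_lt_one hr (by linarith [two_mul_exp_neg_one_lt])).mul_left M
  calc ∑' i, ENNReal.ofReal (exp (-E i))
      ≤ ∑' j : ℕ, {i | E i ≤ (j : ℝ) + 1}.encard * ENNReal.ofReal (exp (-j)) :=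
        tsum_ofReal_exp_neg_le_tsum_encard E hE
    _ ≤ ∑' j : ℕ, ENNReal.ofReal (M * (2 * exp (-1)) ^ j) := by
        refine ENNReal.tsum_le_tsum fun j => ?_
        rw [← (hfin _).cast_ncard_eq, ENat.toENNReal_coe, ← ENNReal.ofReal_natCast,
          ← ENNReal.ofReal_mul (by positivity)]
        refine ENNReal.ofReal_le_ofReal ?_
        calc ({i | E i ≤ (j : ℝ) + 1}.ncard : ℝ) * exp (-j)
            ≤ M * ((j : ℝ) + 1) ^ α * exp (-j) :=
              mul_le_mul_of_nonneg_right (hN _ (by positivity)) (exp_pos _).le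
          _ = M * (exp (-j) * ((j : ℝ) + 1) ^ α) := by ring
          _ ≤ M * (2 * exp (-1)) ^ j := mul_le_mul_of_nonneg_left (exp_neg_mul_rpow_le hα j) hM
    _ = ENNReal.ofReal (M * ∑' j : ℕ, (2 * exp (-1)) ^ j) := by
        rw [← tsum_mul_left, ENNReal.ofReal_tsum_of_nonneg (fun j => by positivity) hsum]
    _ ≤ ENNReal.ofReal (4 * M) := by
        rw [mul_comm 4]
        exact ENNReal.ofReal_le_ofReal
          (mul_le_mul_of_nonneg_left tsum_two_mul_exp_neg_one_pow_le hM)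

lemma summable_and_tsum_exp_neg_mul_le {ι : Type*} (E : ι → ℝ) (hE : ∀ i, 0 ≤ E i)
    {K α β : ℝ} (hK : 0 ≤ K) (hα : α ≤ 1) (hβ : 0 < β) (hfin : ∀ T, {i | E i ≤ T}.Finite)
    (hN : ∀ T, 0 < T → ({i | E i ≤ T}.ncard : ℝ) ≤ K * T ^ α) :
    Summable (fun i => exp (-(β * E i))) ∧ ∑' i, exp (-(β * E i)) ≤ 4 * K / β ^ α := by
  have hlevel : ∀ T, {i | β * E i ≤ T} = {i | E i ≤ T / β} := fun T => by
    ext i; exact (le_div_iff₀' hβ).symm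
  have hbound := tsum_ofReal_exp_neg_le (fun i => β * E i) (fun i => mul_nonneg hβ.le (hE i))
    (div_nonneg hK (rpow_pos_of_pos hβ α).le) hα (fun T => hlevel T ▸ hfin _) fun T hT => by
      rw [hlevel, mul_comm_div, ← div_rpow hT.le hβ.le]
      exact hN _ (div_pos hT hβ)
  have hsum : Summable (fun i => exp (-(β * E i))) := by
    simpa only [ENNReal.toReal_ofReal (exp_pos _).le] using
      ENNReal.summable_toReal (ne_top_of_le_ne_top ENNReal.ofReal_ne_top hbound)
  refine ⟨hsum, ?_⟩
  rwa [← ENNReal.ofReal_le_ofReal_iff (by positivity),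
    ENNReal.ofReal_tsum_of_nonneg (fun _ => (exp_pos _).le) hsum, mul_div_assoc]

lemma summable_and_tsum_dimer_le {U : ℝ} (hU : 0 ≤ U) {f : ℕ → ℕ → ℝ} (hf : ∀ m n, 0 ≤ f m n)
    {K α β : ℝ} (hK : 0 ≤ K) (hα : α ≤ 1) (hβ : 0 < β)
    (hfin : ∀ T : ℝ, {q : ℕ × ℕ | 0 < q.1 ∧ 0 < q.2 ∧ U * (q.1 + q.2) + f q.1 q.2 ≤ T}.Finite)
    (hN : ∀ T : ℝ, 0 ≤ T →
      ({q : ℕ × ℕ | 0 < q.1 ∧ 0 < q.2 ∧ U * (q.1 + q.2) + f q.1 q.2 ≤ T}.ncard : ℝ) ≤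
        K * T ^ α) :
    let w := fun q : {q : ℕ × ℕ // 0 < q.1 ∧ 0 < q.2} =>
      exp (-β * U * ((q : ℕ × ℕ).1 + (q : ℕ × ℕ).2) - β * f (q : ℕ × ℕ).1 (q : ℕ × ℕ).2)
    Summable w ∧ ∑' q, w q ≤ 4 * K / β ^ α := by
  intro w
  let L : ℝ → Set (ℕ × ℕ) := fun T => {q | 0 < q.1 ∧ 0 < q.2 ∧ U * (q.1 + q.2) + f q.1 q.2 ≤ T}
  let E := fun q : {q : ℕ × ℕ // 0 < q.1 ∧ 0 < q.2} =>
    U * ((q : ℕ × ℕ).1 + (q : ℕ × ℕ).2) + f (q : ℕ × ℕ).1 (q : ℕ × ℕ).2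
  have hlevel : ∀ T, {q | E q ≤ T} = Subtype.val ⁻¹' L T := fun T => by
    ext q; simp [E, L, q.2.1, q.2.2]
  have hw : w = fun q => exp (-(β * E q)) := by
    funext q; simp only [w, E]; ring_nf
  rw [hw]
  have hE : ∀ q, 0 ≤ E q := fun q => add_nonneg (mul_nonneg hU (by positivity)) (hf _ _)
  refine summable_and_tsum_exp_neg_mul_le E hE hK hα hβ
    (fun T => hlevel T ▸ (hfin T).preimage Subtype.val_injective.injOn) fun T hT => ?_
  rw [hlevel, ncard_preimage_of_injective_subset_range Subtype.val_injective
    fun q hq => ⟨⟨q, hq.1, hq.2.1⟩, rfl⟩]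
  exact hN T hT.le

lemma one_div_three_mul_le_tsum_exp {x : ℝ} (hx0 : 0 < x) (hx1 : x ≤ 1) :
    1 / (3 * x) ≤ ∑' n : ℕ, exp (-(x * (n + 1))) := by
  set r := exp (-x)
  have hr1 : r < 1 := exp_lt_one_iff.2 (neg_lt_zero.2 hx0)
  have hterm : (fun n : ℕ => exp (-(x * (n + 1)))) = fun n => r * r ^ n := by
    funext n
    rw [← exp_nat_mul, ← exp_add]
    ring_nf
  have hsum : HasSum (fun n : ℕ => exp (-(x * (n + 1)))) (r * (1 - r)⁻¹) :=
    hterm ▸ (hasSum_geometric_of_lt_one (exp_pos _).le hr1).mul_left r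
  have hr_ge : 1 / 3 ≤ r := by
    linarith [exp_neg_one_gt_d9, exp_le_exp.2 (neg_le_neg hx1)]
  have hr_le : 1 - r ≤ x := by linarith [add_one_le_exp (-x)]
  rw [hsum.tsum_eq, ← div_eq_mul_inv, ← div_div]
  exact div_le_div₀ (by positivity) hr_ge (by linarith) hr_le

lemma log_div_ge {S D β U K α : ℝ} (hβ : 0 < β) (hβ1 : β < 1) (hU : 0 < U) (hK : 0 < K)
    (hS : 1 / (3 * (β * U)) ≤ S) (hD0 : 0 < D) (hD : D ≤ 4 * K / β ^ α) :
    (2 - α) * |log β| - log (36 * U ^ 2 * K) ≤ log (S ^ 2 / D) := by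
  have hβα : 0 < β ^ α := rpow_pos_of_pos hβ α
  have hratio : β ^ α / (36 * U ^ 2 * K * β ^ 2) ≤ S ^ 2 / D :=
    calc β ^ α / (36 * U ^ 2 * K * β ^ 2) = (1 / (3 * (β * U))) ^ 2 / (4 * K / β ^ α) := by
          field_simp; ring
      _ ≤ S ^ 2 / D := div_le_div₀ (by positivity) (pow_le_pow_left₀ (by positivity) hS 2) hD0 hD
  have hlog := log_le_log (by positivity) hratio
  rw [log_div hβα.ne' (by positivity), log_rpow hβ, log_mul (by positivity) (by positivity),
    log_pow] at hlog
  rw [abs_of_neg (log_neg hβ hβ1)]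
  push_cast at hlog
  linarith

lemma exists_forall_ge_mul_abs_log_div {g : ℝ → ℝ} {a C C₀ β₀ : ℝ} (hβ₀ : 0 < β₀) (hC : C < a)
    (hg : ∀ β, 0 < β → β < β₀ → g β ≥ a * |log β| / β - C₀ / β) :
    ∃ β₁ > 0, ∀ β, 0 < β → β < β₁ → g β ≥ C * |log β| / β := by
  have hlog : ∀ᶠ β in 𝓝[>] 0, C₀ / (a - C) ≤ |log β| :=
    (tendsto_abs_atBot_atTop.comp tendsto_log_nhdsGT_zero).eventually_ge_atTop _
  obtain ⟨ε, hε, hε_log⟩ := (nhdsGT_basis (0 : ℝ)).eventually_iff.1 hlog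
  refine ⟨min ε β₀, lt_min hε hβ₀, fun β hβ hβ₁ => ?_⟩
  have hgap : C₀ ≤ (a - C) * |log β| :=
    (div_le_iff₀' (sub_pos.2 hC)).1 (hε_log ⟨hβ, hβ₁.trans_le (min_le_left _ _)⟩)
  calc C * |log β| / β ≤ (a * |log β| - C₀) / β :=
        div_le_div_of_nonneg_right (by linarith) hβ.le
    _ = a * |log β| / β - C₀ / β := sub_div _ _ _
    _ ≤ g β := hg β hβ (hβ₁.trans_le (min_le_right _ _))

theorem dimer_excess_general (U : ℝ) (hU : 0 < U) (f : ℕ → ℕ → ℝ) (hf : ∀ m n, 0 ≤ f m n)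
    (K α : ℝ) (hK : 0 < K) (hα1 : α < 1)
    (hfin : ∀ T : ℝ, {q : ℕ × ℕ | 0 < q.1 ∧ 0 < q.2 ∧
        U * (q.1 + q.2) + f q.1 q.2 ≤ T}.Finite)
    (hN : ∀ T : ℝ, 0 ≤ T →
      (({q : ℕ × ℕ | 0 < q.1 ∧ 0 < q.2 ∧
          U * (q.1 + q.2) + f q.1 q.2 ≤ T}.ncard : ℝ)) ≤ K * T ^ α)
    (Zsing Zdim Δ : ℝ → ℝ)
    (hZs : ∀ β : ℝ, 0 < β → Zsing β = ∑' n : ℕ, Real.exp (-β * U * (n + 1)))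
    (hZd : ∀ β : ℝ, 0 < β → Zdim β =
      ∑' q : {q : ℕ × ℕ // 0 < q.1 ∧ 0 < q.2},
        Real.exp (-β * U * ((q : ℕ × ℕ).1 + (q : ℕ × ℕ).2)
          - β * f (q : ℕ × ℕ).1 (q : ℕ × ℕ).2))
    (hΔ : ∀ β : ℝ, 0 < β → Δ β = (1 / β) * Real.log ((Zsing β) ^ 2 / Zdim β)) :
    (∃ β₀ > (0 : ℝ), ∃ C₀ : ℝ, ∀ β : ℝ, 0 < β → β < β₀ →
        Δ β ≥ (2 - α) * |Real.log β| / β - C₀ / β) ∧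
    (∀ C : ℝ, 1 < C → C < 2 - α → ∃ β₁ > (0 : ℝ), ∀ β : ℝ, 0 < β → β < β₁ →
        Δ β ≥ C * |Real.log β| / β) := by
  have hsmall : ∀ β, 0 < β → β < min 1 (1 / U) →
      Δ β ≥ (2 - α) * |log β| / β - log (36 * U ^ 2 * K) / β := by
    intro β hβ hβ₀
    have hβU : β * U ≤ 1 := ((lt_div_iff₀ hU).1 (hβ₀.trans_le (min_le_right _ _))).le
    have hS : 1 / (3 * (β * U)) ≤ Zsing β := by
      simpa only [hZs β hβ, neg_mul] using one_div_three_mul_le_tsum_exp (by positivity) hβU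
    obtain ⟨hsum, hD⟩ := summable_and_tsum_dimer_le hU.le hf hK.le hα1.le hβ hfin hN
    rw [← hZd β hβ] at hD
    have hD0 : 0 < Zdim β := hZd β hβ ▸
      hsum.tsum_pos (fun _ => (exp_pos _).le) ⟨(1, 1), by norm_num⟩ (exp_pos _)
    rw [hΔ β hβ, ← sub_div, ge_iff_le, one_div_mul_eq_div]
    exact div_le_div_of_nonneg_right
      (log_div_ge hβ (hβ₀.trans_le (min_le_left _ _)) hU hK hS hD0 hD) hβ.le
  exact ⟨⟨min 1 (1 / U), by positivity, _, hsmall⟩, fun C _ hC =>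
    exists_forall_ge_mul_abs_log_div (by positivity) hC hsmall⟩

/-- Dimer-excess bound. Under (F4), the dimer excess
`Δ(β) = (1/β) log (Z_sing² / Z_dim)` satisfies
`Δ(β) ≥ (2-α)|log β|/β - C₀/β` for small `β`; in particular
`Δ(β) ≥ C |log β|/β` for any `C ∈ (1, 2-α)` and `β` small. -/
theorem dimer_excess (U : ℝ) (hU : 0 < U) (f : ℕ → ℕ → ℝ) (hf : ∀ m n, 0 ≤ f m n)
    (K α : ℝ) (hK : 0 < K) (hα0 : 0 ≤ α) (hα1 : α < 1)
    (hfin : ∀ T : ℝ, {q : ℕ × ℕ | 0 < q.1 ∧ 0 < q.2 ∧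
        U * (q.1 + q.2) + f q.1 q.2 ≤ T}.Finite)
    (hN : ∀ T : ℝ, 0 ≤ T →
      (({q : ℕ × ℕ | 0 < q.1 ∧ 0 < q.2 ∧
          U * (q.1 + q.2) + f q.1 q.2 ≤ T}.ncard : ℝ)) ≤ K * T ^ α)
    (Zsing Zdim Δ : ℝ → ℝ)
    (hZs : ∀ β : ℝ, 0 < β → Zsing β = ∑' n : ℕ, Real.exp (-β * U * (n + 1)))
    (hZd : ∀ β : ℝ, 0 < β → Zdim β =
      ∑' q : {q : ℕ × ℕ // 0 < q.1 ∧ 0 < q.2},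
        Real.exp (-β * U * ((q : ℕ × ℕ).1 + (q : ℕ × ℕ).2)
          - β * f (q : ℕ × ℕ).1 (q : ℕ × ℕ).2))
    (hΔ : ∀ β : ℝ, 0 < β → Δ β = (1 / β) * Real.log ((Zsing β) ^ 2 / Zdim β)) :
    (∃ β₀ > (0 : ℝ), ∃ C₀ : ℝ, ∀ β : ℝ, 0 < β → β < β₀ →
        Δ β ≥ (2 - α) * |Real.log β| / β - C₀ / β) ∧
    (∀ C : ℝ, 1 < C → C < 2 - α → ∃ β₁ > (0 : ℝ), ∀ β : ℝ, 0 < β → β < β₁ →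
        Δ β ≥ C * |Real.log β| / β) :=
  dimer_excess_general U hU f hf K α hK hα1 hfin hN Zsing Zdim Δ hZs hZd hΔ
end

section
/- Under the hypotheses of the dimer-excess lemma, the quantity δ(β) := Δ(β) - |f₀(β)|, where f₀(β) = -(1/β) log Z_sing(β) and Δ(β) is the dimer excess, satisfies δ(β) ≥ c'·|log β|/β for some constant c' > 0 and all sufficiently small β > 0. -/
open Real

private lemma rpow_le_exp_aux {x α : ℝ} (hx : 0 ≤ x) (hα0 : 0 ≤ α) (hα1 : α ≤ 1) :
    x ^ α ≤ Real.exp x := by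
  rcases le_total x 1 with h | h
  · exact (Real.rpow_le_one hx h hα0).trans (Real.one_le_exp hx)
  · calc x ^ α ≤ x ^ (1:ℝ) := Real.rpow_le_rpow_of_exponent_le h hα1
    _ = x := Real.rpow_one x
    _ ≤ Real.exp x := by linarith [Real.add_one_le_exp x]

private lemma one_sub_exp_neg_ge {x : ℝ} (hx0 : 0 ≤ x) (hx1 : x ≤ 1) :
    x / 2 ≤ 1 - Real.exp (-x) := by
  have h1 : Real.exp (-x) ≤ 1 / (1 + x) := by
    rw [Real.exp_neg, inv_eq_one_div]
    apply div_le_div_of_nonneg_left one_pos.le (by linarith)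
    · linarith [Real.add_one_le_exp x]
  have h2 : 1 / (1 + x) ≤ 1 - x/2 := by
    rw [div_le_iff₀ (by linarith)]
    nlinarith
  linarith

private lemma ind_summable {β x : ℝ} (hβ : 0 < β) :
    Summable (fun j : ℕ => if x ≤ (j:ℝ) then Real.exp (-(β*j)) else 0) := by
  have hr0 : (0:ℝ) < Real.exp (-β) := Real.exp_pos _
  have hr1 : Real.exp (-β) < 1 := Real.exp_lt_one_iff.mpr (by linarith)
  apply Summable.of_nonneg_of_le (fun j => by positivity) (fun j => ?_)
    (summable_geometric_of_lt_one hr0.le hr1)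
  · split
    · rw [← Real.exp_nat_mul]; ring_nf; exact le_refl _
    · positivity

private lemma tail_bound {β x : ℝ} (hβ : 0 < β) (hx : 0 ≤ x) :
    Real.exp (-(β*x)) ≤ Real.exp β * (1 - Real.exp (-β)) *
      ∑' j : ℕ, (if x ≤ (j:ℝ) then Real.exp (-(β*j)) else 0) := by
  set r : ℝ := Real.exp (-β) with hr
  have hr0 : 0 < r := Real.exp_pos _
  have hr1 : r < 1 := Real.exp_lt_one_iff.mpr (by linarith)
  have h1r : (0:ℝ) < 1 - r := by linarith
  set J : ℕ := ⌈x⌉₊ with hJ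
  have hgs : Summable (fun j : ℕ => if x ≤ (j:ℝ) then Real.exp (-(β*j)) else 0) :=
    ind_summable hβ
  have hfs : Summable (fun k : ℕ => Real.exp (-(β*(J+k:ℕ)))) := by
    apply Summable.of_nonneg_of_le (fun k => (Real.exp_pos _).le) (fun k => ?_)
      ((summable_geometric_of_lt_one hr0.le hr1).mul_left (r^J))
    · rw [← Real.exp_nat_mul, ← Real.exp_nat_mul, ← Real.exp_add]
      apply Real.exp_le_exp.mpr
      push_cast; ring_nf; exact le_refl _
  have key : (∑' k : ℕ, Real.exp (-(β*(J+k:ℕ)))) ≤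
      ∑' j : ℕ, (if x ≤ (j:ℝ) then Real.exp (-(β*j)) else 0) := by
    apply Summable.tsum_le_tsum_of_inj (fun k => J + k) (add_right_injective J)
      (fun c _ => by positivity) (fun k => ?_) hfs hgs
    · have hxk : x ≤ ((J + k : ℕ) : ℝ) := by
        push_cast
        exact (Nat.le_ceil x).trans (le_add_of_nonneg_right (Nat.cast_nonneg k))
      rw [if_pos hxk]
  have hcalc : (∑' k : ℕ, Real.exp (-(β*(J+k:ℕ)))) = Real.exp (-(β*J)) * (1 - r)⁻¹ := by
    have hterm : ∀ k : ℕ, Real.exp (-(β*(J+k:ℕ))) = Real.exp (-(β*J)) * r ^ k := by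
      intro k
      rw [hr, ← Real.exp_nat_mul, ← Real.exp_add]
      push_cast; ring_nf
    rw [tsum_congr hterm, tsum_mul_left, tsum_geometric_of_lt_one hr0.le hr1]
  have hJx : (J:ℝ) ≤ x + 1 := le_of_lt (Nat.ceil_lt_add_one hx)
  have hexpJ : Real.exp (-(β*(x+1))) ≤ Real.exp (-(β*J)) :=
    Real.exp_le_exp.mpr (by nlinarith)
  calc Real.exp (-(β*x))
      = Real.exp β * (1 - r) * (Real.exp (-(β*(x+1))) * (1-r)⁻¹) := by
        rw [show Real.exp β * (1-r) * (Real.exp (-(β*(x+1))) * (1-r)⁻¹)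
            = Real.exp β * Real.exp (-(β*(x+1))) * ((1-r) * (1-r)⁻¹) from by ring,
          mul_inv_cancel₀ (ne_of_gt h1r), mul_one, ← Real.exp_add]
        ring_nf
    _ ≤ Real.exp β * (1 - r) * (Real.exp (-(β*J)) * (1-r)⁻¹) := by
        apply mul_le_mul_of_nonneg_left _ (by positivity)
        exact mul_le_mul_of_nonneg_right hexpJ (by positivity)
    _ = Real.exp β * (1 - r) * (∑' k : ℕ, Real.exp (-(β*(J+k:ℕ)))) := by rw [hcalc]
    _ ≤ _ := mul_le_mul_of_nonneg_left key (by positivity)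

set_option maxHeartbeats 2000000 in
/-- Under the dimer-excess hypotheses, `δ(β) = Δ(β) - |f₀(β)|` satisfies
`δ(β) ≥ c' |log β| / β` for some `c' > 0` and all sufficiently small `β`. -/
theorem delta_lower_bound (U : ℝ) (hU : 0 < U) (f : ℕ → ℕ → ℝ)
    (hf : ∀ m n, 0 ≤ f m n)
    (K α : ℝ) (hK : 0 < K) (hα0 : 0 ≤ α) (hα1 : α < 1)
    (hfin : ∀ T : ℝ, {q : ℕ × ℕ | 0 < q.1 ∧ 0 < q.2 ∧
        U * (q.1 + q.2) + f q.1 q.2 ≤ T}.Finite)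
    (hN : ∀ T : ℝ, 0 ≤ T →
      (({q : ℕ × ℕ | 0 < q.1 ∧ 0 < q.2 ∧
          U * (q.1 + q.2) + f q.1 q.2 ≤ T}.ncard : ℝ)) ≤ K * T ^ α)
    (Zsing Zdim Δ f0 : ℝ → ℝ)
    (hZs : ∀ β : ℝ, 0 < β → Zsing β = ∑' n : ℕ, Real.exp (-β * U * (n + 1)))
    (hZd : ∀ β : ℝ, 0 < β → Zdim β =
      ∑' q : {q : ℕ × ℕ // 0 < q.1 ∧ 0 < q.2},
        Real.exp (-β * U * ((q : ℕ × ℕ).1 + (q : ℕ × ℕ).2)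
          - β * f (q : ℕ × ℕ).1 (q : ℕ × ℕ).2))
    (hΔ : ∀ β : ℝ, 0 < β → Δ β = (1 / β) * Real.log ((Zsing β) ^ 2 / Zdim β))
    (hf0 : ∀ β : ℝ, 0 < β → f0 β = -(1 / β) * Real.log (Zsing β)) :
    ∃ c' > (0 : ℝ), ∃ β₀ > (0 : ℝ), ∀ β : ℝ, 0 < β → β < β₀ →
      Δ β - |f0 β| ≥ c' * |Real.log β| / β := by
  have h1α : (0:ℝ) < 1 - α := by linarith
  set c₀ : ℝ := (1/(4*U))/(4*Real.exp 1*K) with hc₀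
  have hc₀pos : 0 < c₀ := by positivity
  refine ⟨(1-α)/2, by linarith, min (min 1 (1/(2*U))) (Real.exp (-(2/(1-α)) * (1 + |Real.log c₀|))), by positivity, ?_⟩
  intro β hβ hββ₀
  have hβ1 : β < 1 := lt_of_lt_of_le hββ₀ ((min_le_left _ _).trans (min_le_left _ _))
  have hβ2 : β < 1/(2*U) := lt_of_lt_of_le hββ₀ ((min_le_left _ _).trans (min_le_right _ _))
  have hβ3 : Real.log β < -(2/(1-α)) * (1 + |Real.log c₀|) := by
    have := lt_of_lt_of_le hββ₀ (min_le_right _ _)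
    exact (Real.log_lt_iff_lt_exp hβ).mpr this
  have hUβ : 2*U*β < 1 := by
    rw [lt_div_iff₀ (by positivity)] at hβ2; linarith
  -- Zsing value and lower bound
  set r : ℝ := Real.exp (-(β*U)) with hrdef
  have hr0 : 0 < r := Real.exp_pos _
  have hr1 : r < 1 := Real.exp_lt_one_iff.mpr (by nlinarith)
  have h1r : (0:ℝ) < 1 - r := by linarith
  have hZsval : Zsing β = r * (1-r)⁻¹ := by
    rw [hZs β hβ]
    have hterm : ∀ n : ℕ, Real.exp (-β * U * (n + 1)) = r * r ^ n := by
      intro n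
      rw [hrdef, ← Real.exp_nat_mul, ← Real.exp_add]
      ring_nf
    rw [tsum_congr hterm, tsum_mul_left, tsum_geometric_of_lt_one hr0.le hr1]
  have hrhalf : 1/2 ≤ r := by
    have := Real.add_one_le_exp (-(β*U))
    nlinarith
  have h1rle : 1 - r ≤ β*U := by
    have := Real.add_one_le_exp (-(β*U))
    nlinarith
  have hβUpos : 0 < β*U := by positivity
  have hZslb : 1/(2*U*β) ≤ Zsing β := by
    rw [hZsval]
    have hinv : (β*U)⁻¹ ≤ (1-r)⁻¹ := by
      apply inv_anti₀ h1r h1rle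
    calc 1/(2*U*β) = (1/2) * (β*U)⁻¹ := by field_simp
      _ ≤ r * (1-r)⁻¹ := by
          apply mul_le_mul hrhalf hinv (by positivity) hr0.le
  have hZs1 : 1 < Zsing β := by
    have : (1:ℝ) < 1/(2*U*β) := by
      rw [lt_div_iff₀ (by positivity)]; nlinarith
    linarith
  have hZs0 : 0 < Zsing β := by linarith
  -- Zdim bound
  set B : ℝ := 4*Real.exp 1*K*(2/β)^α with hB
  have htβ : (0:ℝ) < 2/β := by positivity
  have hBpos : 0 < B := by positivity
  set g : {q : ℕ × ℕ // 0 < q.1 ∧ 0 < q.2} → ℝ := fun q =>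
    Real.exp (-β * U * ((q : ℕ × ℕ).1 + (q : ℕ × ℕ).2)
      - β * f (q : ℕ × ℕ).1 (q : ℕ × ℕ).2) with hg
  set E : {q : ℕ × ℕ // 0 < q.1 ∧ 0 < q.2} → ℝ := fun q =>
    U * ((q : ℕ × ℕ).1 + (q : ℕ × ℕ).2) + f (q : ℕ × ℕ).1 (q : ℕ × ℕ).2 with hE
  have hE0 : ∀ q, 0 ≤ E q := by
    intro q
    have := hf (q : ℕ × ℕ).1 (q : ℕ × ℕ).2
    have : (0:ℝ) ≤ U * ((q : ℕ × ℕ).1 + (q : ℕ × ℕ).2) := by positivity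
    simp only [hE]
    nlinarith [hf (q : ℕ × ℕ).1 (q : ℕ × ℕ).2]
  have hgE : ∀ q, g q = Real.exp (-(β * E q)) := by
    intro q; simp only [hg, hE]; ring_nf
  have hFB : ∀ F : Finset {q : ℕ × ℕ // 0 < q.1 ∧ 0 < q.2}, ∑ q ∈ F, g q ≤ B := by
    intro F
    have step1 : ∑ q ∈ F, g q ≤ Real.exp β * (1 - Real.exp (-β)) *
        ∑ q ∈ F, ∑' j : ℕ, (if E q ≤ (j:ℝ) then Real.exp (-(β*j)) else 0) := by
      rw [Finset.mul_sum]
      apply Finset.sum_le_sum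
      intro q _
      rw [hgE q]
      exact tail_bound hβ (hE0 q)
    have hswap : ∑ q ∈ F, (∑' j : ℕ, (if E q ≤ (j:ℝ) then Real.exp (-(β*j)) else 0)) =
        ∑' j : ℕ, ∑ q ∈ F, (if E q ≤ (j:ℝ) then Real.exp (-(β*j)) else 0) :=
      (Summable.tsum_finsetSum (fun q _ => ind_summable hβ)).symm
    -- bound the inner sum for each j
    have hinner : ∀ j : ℕ, ∑ q ∈ F, (if E q ≤ (j:ℝ) then Real.exp (-(β*j)) else 0)
        ≤ K * (2/β)^α * Real.exp (-(β/2 * j)) := by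
      intro j
      classical
      have hcard : ∑ q ∈ F, (if E q ≤ (j:ℝ) then Real.exp (-(β*j)) else 0)
          = ((F.filter (fun q => E q ≤ (j:ℝ))).card : ℝ) * Real.exp (-(β*j)) := by
        rw [← Finset.sum_filter, Finset.sum_const, nsmul_eq_mul]
      rw [hcard]
      have hcard2 : ((F.filter (fun q => E q ≤ (j:ℝ))).card : ℝ)
          ≤ K * (j:ℝ)^α := by
        have hsub : ((F.filter (fun q => E q ≤ (j:ℝ))).card : ℝ)
            ≤ ({q : ℕ × ℕ | 0 < q.1 ∧ 0 < q.2 ∧ U * (q.1 + q.2) + f q.1 q.2 ≤ (j:ℝ)}.ncard : ℝ) := by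
          rw [Set.ncard_eq_toFinset_card _ (hfin (j:ℝ))]
          have hcb : (F.filter (fun q => E q ≤ (j:ℝ))).card ≤ ((hfin (j:ℝ)).toFinset).card := by
            refine Finset.card_le_card_of_injOn (fun q => (q : ℕ × ℕ)) ?_ ?_
            · intro q hq
              rw [Finset.mem_coe, Set.Finite.mem_toFinset, Set.mem_setOf_eq]
              rcases Finset.mem_filter.mp hq with ⟨_, hle⟩
              exact ⟨q.2.1, q.2.2, hle⟩
            · intro a _ b _ h
              exact Subtype.ext h
          exact_mod_cast hcb
        exact hsub.trans (hN (j:ℝ) (Nat.cast_nonneg j))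
      have hjα : (j:ℝ)^α * Real.exp (-(β*j)) ≤ (2/β)^α * Real.exp (-(β/2 * j)) := by
        have hx : (0:ℝ) ≤ β/2 * j := by positivity
        have h1 : ((β/2 * j):ℝ)^α ≤ Real.exp (β/2 * j) := rpow_le_exp_aux hx hα0 hα1.le
        have h2 : (j:ℝ)^α = ((β/2 * j):ℝ)^α * (2/β)^α := by
          rw [← Real.mul_rpow hx (by positivity)]
          congr 1
          field_simp
        rw [h2]
        calc ((β/2 * j):ℝ)^α * (2/β)^α * Real.exp (-(β*j))
            ≤ Real.exp (β/2 * j) * (2/β)^α * Real.exp (-(β*j)) := by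
              apply mul_le_mul_of_nonneg_right _ (Real.exp_pos _).le
              exact mul_le_mul_of_nonneg_right h1 (by positivity)
          _ = (2/β)^α * Real.exp (-(β/2 * j)) := by
              rw [mul_comm (Real.exp (β/2*j)) _, mul_assoc, ← Real.exp_add]
              congr 2
              ring
      calc ((F.filter (fun q => E q ≤ (j:ℝ))).card : ℝ) * Real.exp (-(β*j))
          ≤ K * (j:ℝ)^α * Real.exp (-(β*j)) :=
            mul_le_mul_of_nonneg_right hcard2 (Real.exp_pos _).le
        _ = K * ((j:ℝ)^α * Real.exp (-(β*j))) := by ring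
        _ ≤ K * ((2/β)^α * Real.exp (-(β/2 * j))) :=
            mul_le_mul_of_nonneg_left hjα hK.le
        _ = K * (2/β)^α * Real.exp (-(β/2 * j)) := by ring
    -- sum the geometric bound
    have hrb0 : (0:ℝ) < Real.exp (-(β/2)) := Real.exp_pos _
    have hrb1 : Real.exp (-(β/2)) < 1 := Real.exp_lt_one_iff.mpr (by linarith)
    have hgeo : Summable (fun j : ℕ => K * (2/β)^α * Real.exp (-(β/2 * j))) := by
      apply Summable.mul_left
      apply Summable.of_nonneg_of_le (fun j => (Real.exp_pos _).le) (fun j => ?_)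
        (summable_geometric_of_lt_one hrb0.le hrb1)
      · rw [← Real.exp_nat_mul]; ring_nf; exact le_refl _
    have hsum_inner : Summable (fun j : ℕ => ∑ q ∈ F, (if E q ≤ (j:ℝ) then Real.exp (-(β*j)) else 0)) := by
      apply Summable.of_nonneg_of_le
        (fun j => Finset.sum_nonneg (fun q _ => by positivity)) hinner hgeo
    have hgeoval : (∑' j : ℕ, K * (2/β)^α * Real.exp (-(β/2 * j)))
        = K * (2/β)^α * (1 - Real.exp (-(β/2)))⁻¹ := by
      have hterm : ∀ j : ℕ, K * (2/β)^α * Real.exp (-(β/2 * j))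
          = K * (2/β)^α * (Real.exp (-(β/2)))^j := by
        intro j
        rw [← Real.exp_nat_mul]; ring_nf
      rw [tsum_congr hterm, tsum_mul_left, tsum_geometric_of_lt_one hrb0.le hrb1]
    have hinvb : (1 - Real.exp (-(β/2)))⁻¹ ≤ 4/β := by
      have h4 : β/4 ≤ 1 - Real.exp (-(β/2)) := by
        have := one_sub_exp_neg_ge (x := β/2) (by positivity) (by linarith)
        linarith
      have hpos : (0:ℝ) < β/4 := by positivity
      calc (1 - Real.exp (-(β/2)))⁻¹ ≤ (β/4)⁻¹ := inv_anti₀ hpos h4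
        _ = 4/β := by field_simp
    have hexpβ : Real.exp β ≤ Real.exp 1 := Real.exp_le_exp.mpr hβ1.le
    have h1eβ : 1 - Real.exp (-β) ≤ β := by
      have := Real.add_one_le_exp (-β); linarith
    have h1eβ0 : 0 ≤ 1 - Real.exp (-β) := by
      have : Real.exp (-β) ≤ 1 := Real.exp_le_one_iff.mpr (by linarith)
      linarith
    calc ∑ q ∈ F, g q
        ≤ Real.exp β * (1 - Real.exp (-β)) *
          ∑ q ∈ F, ∑' j : ℕ, (if E q ≤ (j:ℝ) then Real.exp (-(β*j)) else 0) := step1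
      _ = Real.exp β * (1 - Real.exp (-β)) *
          ∑' j : ℕ, ∑ q ∈ F, (if E q ≤ (j:ℝ) then Real.exp (-(β*j)) else 0) := by rw [hswap]
      _ ≤ Real.exp β * (1 - Real.exp (-β)) *
          ∑' j : ℕ, K * (2/β)^α * Real.exp (-(β/2 * j)) := by
          apply mul_le_mul_of_nonneg_left (Summable.tsum_le_tsum hinner hsum_inner hgeo) (by positivity)
      _ = Real.exp β * (1 - Real.exp (-β)) * (K * (2/β)^α * (1 - Real.exp (-(β/2)))⁻¹) := by
          rw [hgeoval]
      _ ≤ Real.exp 1 * β * (K * (2/β)^α * (4/β)) := by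
          apply mul_le_mul
          · exact mul_le_mul hexpβ h1eβ h1eβ0 (Real.exp_pos 1).le
          · apply mul_le_mul_of_nonneg_left hinvb (by positivity)
          · exact mul_nonneg (by positivity) (inv_nonneg.mpr (by linarith))
          · positivity
      _ = B := by
          rw [hB]; field_simp
  have hgnonneg : ∀ q, 0 ≤ g q := fun q => (Real.exp_pos _).le
  have hgsum : Summable g := summable_of_sum_le hgnonneg hFB
  have hZdub : Zdim β ≤ B := by
    rw [hZd β hβ]
    exact Summable.tsum_le_of_sum_le hgsum hFB
  have hZd0 : 0 < Zdim β := by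
    rw [hZd β hβ]
    have hle := Summable.le_tsum hgsum ⟨(1,1), by norm_num⟩ (fun q _ => hgnonneg q)
    exact lt_of_lt_of_le (Real.exp_pos _) hle
  -- assemble
  have hlogZs : 0 ≤ Real.log (Zsing β) := Real.log_nonneg hZs1.le
  have habs : |f0 β| = (1/β) * Real.log (Zsing β) := by
    have hle0 : -(1/β) * Real.log (Zsing β) ≤ 0 := by
      have h0 : 0 ≤ (1/β) * Real.log (Zsing β) := by positivity
      linarith
    rw [hf0 β hβ, abs_of_nonpos hle0]
    ring
  have hΔval : Δ β = (1/β) * (2 * Real.log (Zsing β) - Real.log (Zdim β)) := by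
    rw [hΔ β hβ, Real.log_div (pow_ne_zero 2 hZs0.ne') hZd0.ne', Real.log_pow]
    push_cast
    ring
  have hlog1 : Real.log (1/(2*U*β)) ≤ Real.log (Zsing β) := by
    have hp : (0:ℝ) < 1/(2*U*β) := by positivity
    exact Real.log_le_log hp hZslb
  have hlog2 : Real.log (Zdim β) ≤ Real.log B := Real.log_le_log hZd0 hZdub
  have hlogβ : Real.log β < 0 := Real.log_neg hβ hβ1
  have habsβ : |Real.log β| = -Real.log β := abs_of_neg hlogβ
  -- the key numeric bound
  have hkey : ((1-α)/2) * |Real.log β| ≤ Real.log (1/(2*U*β)) - Real.log B := by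
    have e1 : Real.log (1/(2*U*β)) = Real.log (1/(4*U)) + Real.log (2/β) := by
      rw [← Real.log_mul (by positivity) (by positivity)]
      congr 1
      rw [div_mul_div_comm, one_mul, div_eq_div_iff (by positivity) (by positivity)]
      ring
    have e2 : Real.log B = Real.log (4*Real.exp 1*K) + α * Real.log (2/β) := by
      have hne1 : (4*Real.exp 1*K) ≠ 0 := by positivity
      have hne2 : ((2/β):ℝ)^α ≠ 0 := by positivity
      rw [hB, Real.log_mul hne1 hne2, Real.log_rpow htβ]
    have e3 : Real.log c₀ = Real.log (1/(4*U)) - Real.log (4*Real.exp 1*K) := by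
      rw [hc₀, Real.log_div (by positivity) (by positivity)]
    have e4 : |Real.log β| ≤ Real.log (2/β) := by
      rw [habsβ]
      have : Real.log (2/β) = Real.log 2 - Real.log β := Real.log_div (by norm_num) hβ.ne'
      have hl2 : (0:ℝ) ≤ Real.log 2 := Real.log_nonneg (by norm_num)
      linarith
    have e5 : (2/(1-α)) * (1 + |Real.log c₀|) < |Real.log β| := by
      rw [habsβ]; linarith
    have e6 : -Real.log c₀ ≤ |Real.log c₀| := neg_le_abs _
    have e7 : ((1-α)/2) * |Real.log β| ≥ 1 + |Real.log c₀| := by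
      rw [ge_iff_le, ← div_le_iff₀' (by linarith : (0:ℝ) < (1-α)/2)]
      have : (2/(1-α)) * (1 + |Real.log c₀|) = (1 + |Real.log c₀|) / ((1-α)/2) := by
        field_simp
      linarith [e5, this.symm.le]
    have e8 : (1-α) * Real.log (2/β) ≥ (1-α) * |Real.log β| :=
      mul_le_mul_of_nonneg_left e4 h1α.le
    have habsnn : 0 ≤ |Real.log β| := abs_nonneg _
    -- log(1/(2Uβ)) - log B = (1-α) log(2/β) + log c₀
    have e9 : Real.log (1/(2*U*β)) - Real.log B = (1-α) * Real.log (2/β) + Real.log c₀ := by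
      rw [e1, e2, e3]; ring
    rw [e9]
    nlinarith [e6, e7, e8, abs_nonneg (Real.log c₀)]
  have hβinv : (0:ℝ) < 1/β := by positivity
  have hfinal : Δ β - |f0 β| = (1/β) * (Real.log (Zsing β) - Real.log (Zdim β)) := by
    rw [hΔval, habs]; ring
  rw [ge_iff_le, hfinal]
  calc ((1-α)/2) * |Real.log β| / β = (1/β) * (((1-α)/2) * |Real.log β|) := by ring
    _ ≤ (1/β) * (Real.log (1/(2*U*β)) - Real.log B) :=
        mul_le_mul_of_nonneg_left hkey hβinv.le
    _ ≤ (1/β) * (Real.log (Zsing β) - Real.log (Zdim β)) := by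
        apply mul_le_mul_of_nonneg_left _ hβinv.le
        linarith
end

section
/- Let C be a finite set of sites, G = (C, E) a graph on C, and f : ℕ×ℕ → [0,∞) a nonnegative symmetric function. Let M ⊆ E be a matching in G. Define Z_C = Σ_{n : C → ℕ} exp(-βU Σ_{x∈C} n_x - β Σ_{{x,y}∈E} f(n_x,n_y)). Then Z_C ≤ Z_dim^{|M|} · Z_sing^{|C| - 2|M|}, where Z_sing = Σ_{n≥1} e^{-βUn} and Z_dim = Σ_{m,n≥1} e^{-βU(m+n) - βf(m,n)}. Equivalently, with f̃(C) = -(1/β)log Z_C, f_dim = -(1/β)log Z_dim, f₀ = -(1/β)log Z_sing, and Δ = f_dim - 2f₀: f̃(C) ≥ |C|·f₀ + |M|·Δ. -/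
open scoped ENNReal
set_option maxHeartbeats 1000000

private lemma tsum_pi_prod_fin : ∀ (k : ℕ) (A : Type) (h : Fin k → A → ℝ≥0∞),
    (∑' g : Fin k → A, ∏ i, h i (g i)) = ∏ i, ∑' a, h i a := by
  intro k
  induction k with
  | zero =>
    intro A h
    simp only [Fin.prod_univ_zero]
    exact tsum_eq_single (fun i => i.elim0)
      (fun b hb => absurd (funext fun i => i.elim0) hb)
  | succ n ih =>
    intro A h
    calc (∑' g : Fin (n+1) → A, ∏ i, h i (g i))
        = ∑' p : A × (Fin n → A), ∏ i, h i (Fin.cons (α := fun _ => A) p.1 p.2 i) := by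
          rw [← Equiv.tsum_eq (Fin.consEquiv (fun _ : Fin (n+1) => A))
            (fun g => ∏ i, h i (g i))]
          congr 1
      _ = ∑' p : A × (Fin n → A), h 0 p.1 * ∏ i : Fin n, h i.succ (p.2 i) := by
          congr 1; funext p; rw [Fin.prod_univ_succ]; simp
      _ = (∑' a, h 0 a) * ∑' g : Fin n → A, ∏ i, h i.succ (g i) := by
          rw [ENNReal.tsum_prod']
          simp_rw [ENNReal.tsum_mul_left]
          rw [ENNReal.tsum_mul_right]
      _ = ∏ i, ∑' a, h i a := by
          rw [ih A (fun i a => h i.succ a), Fin.prod_univ_succ]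

private lemma tsum_pi_prod {ι : Type} [Fintype ι] {A : Type} (h : ι → A → ℝ≥0∞) :
    (∑' g : ι → A, ∏ i, h i (g i)) = ∏ i, ∑' a, h i a := by
  classical
  let e := Fintype.equivFin ι
  calc (∑' g : ι → A, ∏ i, h i (g i))
      = ∑' g' : Fin (Fintype.card ι) → A,
          ∏ i, h i ((Equiv.arrowCongr e.symm (Equiv.refl A)) g' i) :=
        ((Equiv.arrowCongr e.symm (Equiv.refl A)).tsum_eq
          (fun g => ∏ i, h i (g i))).symm
    _ = ∑' g' : Fin (Fintype.card ι) → A, ∏ j, h (e.symm j) (g' j) := by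
        congr 1; funext g'
        refine Fintype.prod_equiv e _ _ (fun i => ?_)
        simp [Equiv.arrowCongr]
    _ = ∏ j, ∑' a, h (e.symm j) a := tsum_pi_prod_fin _ A _
    _ = ∏ i, ∑' a, h i a := Equiv.prod_comp e.symm (fun i => ∑' a, h i a)

/-- Cluster excess via matchings: if `M ⊆ E` is a matching in a graph on a
finite vertex set `V`, then the cluster partition function satisfies
`Z_C ≤ Z_dim^{|M|} · Z_sing^{|V| - 2|M|}`. -/
theorem cluster_excess_matching (V : Type) [Fintype V] [DecidableEq V]
    (β U : ℝ) (hβ : 0 < β) (hU : 0 < U)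
    (f : ℕ → ℕ → ℝ) (hfnn : ∀ m n, 0 ≤ f m n) (hfsymm : ∀ m n, f m n = f n m)
    (E M : Finset (V × V)) (hME : M ⊆ E)
    (hloop : ∀ e ∈ E, e.1 ≠ e.2)
    (hmatch : ∀ e ∈ M, ∀ e' ∈ M, e ≠ e' →
      e.1 ≠ e'.1 ∧ e.1 ≠ e'.2 ∧ e.2 ≠ e'.1 ∧ e.2 ≠ e'.2)
    (ZC Zsing Zdim : ℝ)
    (hZC : ZC = ∑' n : V → ℕ+,
      Real.exp (-β * U * (∑ x : V, (n x : ℝ))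
        - β * ∑ e ∈ E, f (n e.1) (n e.2)))
    (hZs : Zsing = ∑' n : ℕ+, Real.exp (-β * U * (n : ℝ)))
    (hZd : Zdim = ∑' q : ℕ+ × ℕ+,
      Real.exp (-β * U * ((q.1 : ℝ) + (q.2 : ℝ)) - β * f q.1 q.2)) :
    ZC ≤ Zdim ^ M.card * Zsing ^ (Fintype.card V - 2 * M.card) := by
  classical
  have hβU : 0 < β * U := mul_pos hβ hU
  -- single-site and dimer summands
  set s1 : ℕ+ → ℝ := fun k => Real.exp (-β * U * (k : ℝ)) with hs1def
  set d : ℕ+ × ℕ+ → ℝ :=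
    fun q => Real.exp (-β * U * ((q.1 : ℝ) + (q.2 : ℝ)) - β * f q.1 q.2) with hddef
  have hs1nn : ∀ k, 0 ≤ s1 k := fun k => (Real.exp_pos _).le
  have hdnn : ∀ q, 0 ≤ d q := fun q => (Real.exp_pos _).le
  have hs1 : Summable s1 := by
    have h0 : Summable (fun k : ℕ => Real.exp ((k : ℝ) * (-(β * U)))) :=
      Real.summable_exp_nat_mul_iff.mpr (by linarith)
    have h1 : Summable ((fun k : ℕ => Real.exp ((k : ℝ) * (-(β * U)))) ∘
        (fun k : ℕ+ => (k : ℕ))) := h0.comp_injective PNat.coe_injective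
    refine h1.congr (fun k => ?_)
    simp only [Function.comp, hs1def]
    ring_nf
  have hd : Summable d := by
    have hmul : Summable (fun q : ℕ+ × ℕ+ => s1 q.1 * s1 q.2) :=
      hs1.mul_of_nonneg hs1 hs1nn hs1nn
    refine hmul.of_nonneg_of_le hdnn (fun q => ?_)
    rw [hddef]
    simp only
    rw [hs1def]
    simp only
    rw [← Real.exp_add]
    apply Real.exp_le_exp.mpr
    have hf := hfnn (q.1 : ℕ) (q.2 : ℕ)
    nlinarith [hβ.le]
  have hZsnn : 0 ≤ Zsing := by
    rw [hZs]; exact tsum_nonneg (fun k => (Real.exp_pos _).le)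
  have hZdnn : 0 ≤ Zdim := by
    rw [hZd]; exact tsum_nonneg (fun q => (Real.exp_pos _).le)
  -- ENNReal versions
  set S1 : ℕ+ → ℝ≥0∞ := fun k => ENNReal.ofReal (s1 k) with hS1def
  set D : ℕ+ × ℕ+ → ℝ≥0∞ := fun q => ENNReal.ofReal (d q) with hDdef
  have hAs : (∑' k, S1 k) = ENNReal.ofReal Zsing := by
    rw [hZs, ENNReal.ofReal_tsum_of_nonneg hs1nn hs1]
  have hAd : (∑' q, D q) = ENNReal.ofReal Zdim := by
    rw [hZd, ENNReal.ofReal_tsum_of_nonneg hdnn hd]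
  -- matched and unmatched vertices
  set S : Finset V := M.image Prod.fst ∪ M.image Prod.snd with hSdef
  set R : Finset V := Finset.univ \ S with hRdef
  set ψ : ({ x // x ∈ M } × Bool) ⊕ { x // x ∈ R } → V :=
    Sum.elim (fun p => if p.2 then p.1.1.2 else p.1.1.1) (fun x => x.1) with hψdef
  have hmemS : ∀ (m : { x // x ∈ M }) (b : Bool),
      (if b then m.1.2 else m.1.1) ∈ S := by
    intro m b
    cases b
    · simp only [if_neg Bool.false_ne_true]
      exact Finset.mem_union_left _ (Finset.mem_image_of_mem Prod.fst m.2)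
    · simp only [if_pos rfl]
      exact Finset.mem_union_right _ (Finset.mem_image_of_mem Prod.snd m.2)
  have hψinj : Function.Injective ψ := by
    rintro (⟨m, b⟩ | ⟨x, hx⟩) (⟨m', b'⟩ | ⟨x', hx'⟩) hvv
    · simp only [hψdef, Sum.elim_inl] at hvv
      by_cases hmm : m = m'
      · subst hmm
        have hl := hloop m.1 (hME m.2)
        cases b <;> cases b' <;> simp_all
      · have hne : m.1 ≠ m'.1 := fun h => hmm (Subtype.ext h)
        have h4 := hmatch m.1 m.2 m'.1 m'.2 hne
        exfalso
        cases b <;> cases b' <;> simp_all [h4.1, h4.2.1, h4.2.2.1, h4.2.2.2]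
    · exfalso
      simp only [hψdef, Sum.elim_inl, Sum.elim_inr] at hvv
      have hxS : x' ∉ S := (Finset.mem_sdiff.mp hx').2
      exact hxS (hvv ▸ hmemS m b)
    · exfalso
      simp only [hψdef, Sum.elim_inl, Sum.elim_inr] at hvv
      have hxS : x ∉ S := (Finset.mem_sdiff.mp hx).2
      exact hxS (by rw [hvv]; exact hmemS m' b')
    · simp only [hψdef, Sum.elim_inr] at hvv
      exact congrArg Sum.inr (Subtype.ext hvv)
  have hψsurj : Function.Surjective ψ := by
    intro v
    by_cases hv : v ∈ S
    · rcases Finset.mem_union.mp hv with h | h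
      · rcases Finset.mem_image.mp h with ⟨p, hp, hpv⟩
        exact ⟨Sum.inl (⟨p, hp⟩, false), hpv⟩
      · rcases Finset.mem_image.mp h with ⟨p, hp, hpv⟩
        exact ⟨Sum.inl (⟨p, hp⟩, true), hpv⟩
    · exact ⟨Sum.inr ⟨v, Finset.mem_sdiff.mpr ⟨Finset.mem_univ v, hv⟩⟩, rfl⟩
  set eV : (({ x // x ∈ M } × Bool) ⊕ { x // x ∈ R }) ≃ V :=
    Equiv.ofBijective ψ ⟨hψinj, hψsurj⟩ with heVdef
  have heV : ∀ s, eV s = ψ s := fun s => rfl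
  have hcard : Fintype.card V = 2 * M.card + R.card := by
    have hc := (Fintype.card_congr eV).symm
    simp only [Fintype.card_sum, Fintype.card_prod, Fintype.card_bool,
      Fintype.card_coe] at hc
    omega
  have hRcard : Fintype.card V - 2 * M.card = R.card := by omega
  -- abbreviation for the transported configuration
  have hcomp : ∀ (g : (({ x // x ∈ M } × Bool) ⊕ { x // x ∈ R }) → ℕ+) s,
      (Equiv.arrowCongr eV (Equiv.refl ℕ+)) g (eV s) = g s := by
    intro g s
    show g (eV.symm (eV s)) = g s
    rw [Equiv.symm_apply_apply]
  -- pointwise factorization of the matching-only Boltzmann weight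
  have hpoint : ∀ g : (({ x // x ∈ M } × Bool) ⊕ { x // x ∈ R }) → ℕ+,
      ENNReal.ofReal (Real.exp
        (-β * U * (∑ x : V, ((Equiv.arrowCongr eV (Equiv.refl ℕ+)) g x : ℝ))
          - β * ∑ p ∈ M, f ((Equiv.arrowCongr eV (Equiv.refl ℕ+)) g p.1)
              ((Equiv.arrowCongr eV (Equiv.refl ℕ+)) g p.2)))
      = (∏ m : { x // x ∈ M },
            D (g (Sum.inl (m, false)), g (Sum.inl (m, true))))
        * ∏ x : { x // x ∈ R }, S1 (g (Sum.inr x)) := by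
    intro g
    have hv1 : ∀ m : { x // x ∈ M },
        (Equiv.arrowCongr eV (Equiv.refl ℕ+)) g m.1.1 = g (Sum.inl (m, false)) :=
      fun m => hcomp g (Sum.inl (m, false))
    have hv2 : ∀ m : { x // x ∈ M },
        (Equiv.arrowCongr eV (Equiv.refl ℕ+)) g m.1.2 = g (Sum.inl (m, true)) :=
      fun m => hcomp g (Sum.inl (m, true))
    have hvert : (∑ x : V, ((Equiv.arrowCongr eV (Equiv.refl ℕ+)) g x : ℝ))
        = (∑ m : { x // x ∈ M },
            ((g (Sum.inl (m, false)) : ℝ) + (g (Sum.inl (m, true)) : ℝ)))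
          + ∑ x : { x // x ∈ R }, (g (Sum.inr x) : ℝ) := by
      rw [← Equiv.sum_comp eV
        (fun v => ((Equiv.arrowCongr eV (Equiv.refl ℕ+)) g v : ℝ))]
      simp only [hcomp g]
      rw [Fintype.sum_sum_type, Fintype.sum_prod_type]
      congr 1
      refine Finset.sum_congr rfl (fun m _ => ?_)
      rw [Fintype.sum_bool, add_comm]
    have hedge : (∑ p ∈ M, f ((Equiv.arrowCongr eV (Equiv.refl ℕ+)) g p.1)
          ((Equiv.arrowCongr eV (Equiv.refl ℕ+)) g p.2))
        = ∑ m : { x // x ∈ M },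
            f (g (Sum.inl (m, false))) (g (Sum.inl (m, true))) := by
      rw [← Finset.sum_attach M (fun p => f ((Equiv.arrowCongr eV (Equiv.refl ℕ+)) g p.1)
        ((Equiv.arrowCongr eV (Equiv.refl ℕ+)) g p.2))]
      refine Finset.sum_congr (Finset.univ_eq_attach M).symm (fun m _ => ?_)
      rw [hv1 m, hv2 m]
    rw [hvert, hedge]
    have hexp : -β * U * ((∑ m : { x // x ∈ M },
            ((g (Sum.inl (m, false)) : ℝ) + (g (Sum.inl (m, true)) : ℝ)))
          + ∑ x : { x // x ∈ R }, (g (Sum.inr x) : ℝ))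
        - β * ∑ m : { x // x ∈ M },
            f (g (Sum.inl (m, false))) (g (Sum.inl (m, true)))
        = (∑ m : { x // x ∈ M },
            (-β * U * ((g (Sum.inl (m, false)) : ℝ) + (g (Sum.inl (m, true)) : ℝ))
              - β * f (g (Sum.inl (m, false))) (g (Sum.inl (m, true)))))
          + ∑ x : { x // x ∈ R }, (-β * U * (g (Sum.inr x) : ℝ)) := by
      rw [Finset.sum_sub_distrib, ← Finset.mul_sum, ← Finset.mul_sum, ← Finset.mul_sum]
      ring
    rw [hexp, Real.exp_add, Real.exp_sum, Real.exp_sum,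
      ENNReal.ofReal_mul (Finset.prod_nonneg (fun m _ => (Real.exp_pos _).le)),
      ENNReal.ofReal_prod_of_nonneg (fun m _ => (Real.exp_pos _).le),
      ENNReal.ofReal_prod_of_nonneg (fun x _ => (Real.exp_pos _).le)]
  -- the main ENNReal estimate
  have hA1 : (∑' n : V → ℕ+, ENNReal.ofReal (Real.exp
        (-β * U * (∑ x : V, (n x : ℝ)) - β * ∑ p ∈ E, f (n p.1) (n p.2))))
      ≤ ENNReal.ofReal Zdim ^ M.card * ENNReal.ofReal Zsing ^ R.card := by
    calc (∑' n : V → ℕ+, ENNReal.ofReal (Real.exp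
          (-β * U * (∑ x : V, (n x : ℝ)) - β * ∑ p ∈ E, f (n p.1) (n p.2))))
        ≤ ∑' n : V → ℕ+, ENNReal.ofReal (Real.exp
          (-β * U * (∑ x : V, (n x : ℝ)) - β * ∑ p ∈ M, f (n p.1) (n p.2))) := by
          refine ENNReal.tsum_le_tsum (fun n => ENNReal.ofReal_le_ofReal ?_)
          apply Real.exp_le_exp.mpr
          have hsub : (∑ p ∈ M, f (n p.1) (n p.2)) ≤ ∑ p ∈ E, f (n p.1) (n p.2) :=
            Finset.sum_le_sum_of_subset_of_nonneg hME (fun p _ _ => hfnn _ _)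
          have := mul_le_mul_of_nonneg_left hsub hβ.le
          linarith
      _ = ∑' g : (({ x // x ∈ M } × Bool) ⊕ { x // x ∈ R }) → ℕ+,
            ENNReal.ofReal (Real.exp
              (-β * U * (∑ x : V, ((Equiv.arrowCongr eV (Equiv.refl ℕ+)) g x : ℝ))
                - β * ∑ p ∈ M, f ((Equiv.arrowCongr eV (Equiv.refl ℕ+)) g p.1)
                    ((Equiv.arrowCongr eV (Equiv.refl ℕ+)) g p.2))) :=
          ((Equiv.arrowCongr eV (Equiv.refl ℕ+)).tsum_eq (fun n =>
            ENNReal.ofReal (Real.exp (-β * U * (∑ x : V, (n x : ℝ))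
              - β * ∑ p ∈ M, f (n p.1) (n p.2))))).symm
      _ = ∑' g : (({ x // x ∈ M } × Bool) ⊕ { x // x ∈ R }) → ℕ+,
            (∏ m : { x // x ∈ M }, D (g (Sum.inl (m, false)), g (Sum.inl (m, true))))
              * ∏ x : { x // x ∈ R }, S1 (g (Sum.inr x)) := tsum_congr hpoint
      _ = ∑' p : (({ x // x ∈ M } × Bool) → ℕ+) × ({ x // x ∈ R } → ℕ+),
            (∏ m : { x // x ∈ M }, D (p.1 (m, false), p.1 (m, true)))
              * ∏ x : { x // x ∈ R }, S1 (p.2 x) :=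
          ((Equiv.sumArrowEquivProdArrow _ _ ℕ+).symm.tsum_eq (fun g =>
            (∏ m : { x // x ∈ M }, D (g (Sum.inl (m, false)), g (Sum.inl (m, true))))
              * ∏ x : { x // x ∈ R }, S1 (g (Sum.inr x)))).symm
      _ = (∑' g1 : ({ x // x ∈ M } × Bool) → ℕ+,
            ∏ m : { x // x ∈ M }, D (g1 (m, false), g1 (m, true)))
          * ∑' g2 : { x // x ∈ R } → ℕ+, ∏ x : { x // x ∈ R }, S1 (g2 x) := by
          rw [ENNReal.tsum_prod']
          simp only [ENNReal.tsum_mul_left]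
          rw [ENNReal.tsum_mul_right]
      _ = ENNReal.ofReal Zdim ^ M.card * ENNReal.ofReal Zsing ^ R.card := by
          congr 1
          · have step : (∑' g1 : ({ x // x ∈ M } × Bool) → ℕ+,
                ∏ m : { x // x ∈ M }, D (g1 (m, false), g1 (m, true)))
                = ∑' h : { x // x ∈ M } → ℕ+ × ℕ+,
                    ∏ m : { x // x ∈ M }, D (h m) :=
              Equiv.tsum_eq ((Equiv.curry ({ x // x ∈ M }) Bool ℕ+).trans
                (Equiv.piCongrRight (fun _ : { x // x ∈ M } =>
                  Equiv.boolArrowEquivProd ℕ+)))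
                (fun h : { x // x ∈ M } → ℕ+ × ℕ+ =>
                  ∏ m : { x // x ∈ M }, D (h m))
            rw [step, tsum_pi_prod (fun (_ : { x // x ∈ M }) (q : ℕ+ × ℕ+) => D q),
              Finset.prod_const, Finset.card_univ, Fintype.card_coe, hAd]
          · rw [tsum_pi_prod (fun (_ : { x // x ∈ R }) (k : ℕ+) => S1 k),
              Finset.prod_const, Finset.card_univ, Fintype.card_coe, hAs]
  -- wrap up
  have hBne : ENNReal.ofReal Zdim ^ M.card * ENNReal.ofReal Zsing ^ R.card ≠ ⊤ :=
    ENNReal.mul_ne_top (ENNReal.pow_ne_top ENNReal.ofReal_ne_top)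
      (ENNReal.pow_ne_top ENNReal.ofReal_ne_top)
  have hAne : (∑' n : V → ℕ+, ENNReal.ofReal (Real.exp
      (-β * U * (∑ x : V, (n x : ℝ)) - β * ∑ p ∈ E, f (n p.1) (n p.2)))) ≠ ⊤ :=
    ne_top_of_le_ne_top hBne hA1
  have hsumm : Summable (fun n : V → ℕ+ => Real.exp
      (-β * U * (∑ x : V, (n x : ℝ)) - β * ∑ p ∈ E, f (n p.1) (n p.2))) := by
    have h := ENNReal.summable_toReal hAne
    exact h.congr (fun n => ENNReal.toReal_ofReal (Real.exp_pos _).le)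
  have hZCval : ZC = (∑' n : V → ℕ+, ENNReal.ofReal (Real.exp
      (-β * U * (∑ x : V, (n x : ℝ)) - β * ∑ p ∈ E, f (n p.1) (n p.2)))).toReal := by
    rw [hZC, ← ENNReal.ofReal_tsum_of_nonneg (fun n => (Real.exp_pos _).le) hsumm,
      ENNReal.toReal_ofReal (tsum_nonneg (fun n => (Real.exp_pos _).le))]
  rw [hZCval, hRcard]
  refine le_trans (ENNReal.toReal_mono hBne hA1) (le_of_eq ?_)
  rw [ENNReal.toReal_mul, ENNReal.toReal_pow, ENNReal.toReal_pow,
    ENNReal.toReal_ofReal hZdnn, ENNReal.toReal_ofReal hZsnn]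
end

section
/- Let ω ∈ Ω^𝕃 be a macro-configuration (𝕃 = ℤ^d with the ℓ^∞ metric, Ω = {0,1}^{{0,1}^d}), with reference values η̂¹ ≠ η̂². Call a site i '#-correct' if ω_j = η̂^# for all j with d_∞(i,j) ≤ 1, 'correct' if it is #-correct for some # ∈ {1,2}, and 'incorrect' otherwise. Let Γ(ω) be the union of ℓ^∞-balls of radius 1 around all incorrect sites. If C ⊆ 𝕃 \ Γ(ω) is nonempty and d_∞-connected, then every site of C is correct and all sites of C are #-correct for the same # ∈ {1,2}. -/
/-- Uniform type on correct regions: any nonempty `d_∞`-connected set of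
macro-sites disjoint from the thickened boundary `Γ(ω)` consists of correct
sites, all of the same type. -/
theorem uniform_type_on_correct_regions (d : ℕ) (hd : 2 ≤ d)
    (Ω : Type) (η1 η2 : Ω) (hη : η1 ≠ η2)
    (ω : (Fin d → ℤ) → Ω)
    -- `near i j` means `d_∞(i, j) ≤ 1`
    (near : (Fin d → ℤ) → (Fin d → ℤ) → Prop)
    (hnear : ∀ i j, near i j ↔ ∀ k, |i k - j k| ≤ 1)
    (correct1 correct2 incorrect : (Fin d → ℤ) → Prop)
    (hc1 : ∀ i, correct1 i ↔ ∀ j, near i j → ω j = η1)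
    (hc2 : ∀ i, correct2 i ↔ ∀ j, near i j → ω j = η2)
    (hinc : ∀ i, incorrect i ↔ ¬ (correct1 i ∨ correct2 i))
    (Γ : Set (Fin d → ℤ))
    (hΓ : Γ = {j | ∃ i, incorrect i ∧ near i j})
    (C : Set (Fin d → ℤ)) (hCne : C.Nonempty) (hCΓ : C ∩ Γ = ∅)
    (hconn : ∀ x ∈ C, ∀ y ∈ C,
      Relation.ReflTransGen (fun a b => a ∈ C ∧ b ∈ C ∧ a ≠ b ∧ near a b) x y) :
    (∀ i ∈ C, correct1 i ∨ correct2 i) ∧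
    ((∀ i ∈ C, correct1 i) ∨ (∀ i ∈ C, correct2 i)) := by
  have hself : ∀ i, near i i := fun i => (hnear i i).mpr (fun k => by simp)
  have hcor : ∀ i ∈ C, correct1 i ∨ correct2 i := by
    intro i hi
    by_contra h
    have : i ∈ C ∩ Γ := ⟨hi, by rw [hΓ]; exact ⟨i, (hinc i).mpr h, hself i⟩⟩
    rw [hCΓ] at this
    exact this
  refine ⟨hcor, ?_⟩
  obtain ⟨x0, hx0⟩ := hCne
  have step1 : ∀ a b, a ∈ C → b ∈ C → near a b → correct1 a → correct1 b := by
    intro a b ha hb hab h1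
    rcases hcor b hb with h | h
    · exact h
    · exfalso
      have e1 : ω b = η1 := (hc1 a).mp h1 b hab
      have e2 : ω b = η2 := (hc2 b).mp h b (hself b)
      exact hη (e1 ▸ e2)
  have step2 : ∀ a b, a ∈ C → b ∈ C → near a b → correct2 a → correct2 b := by
    intro a b ha hb hab h2
    rcases hcor b hb with h | h
    · exfalso
      have e1 : ω b = η2 := (hc2 a).mp h2 b hab
      have e2 : ω b = η1 := (hc1 b).mp h b (hself b)
      exact hη (e2 ▸ e1)
    · exact h
  rcases hcor x0 hx0 with h1 | h2
  · left
    intro i hi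
    have p := hconn x0 hx0 i hi
    clear hi
    induction p with
    | refl => exact h1
    | tail _ hstep ih => exact step1 _ _ hstep.1 hstep.2.1 hstep.2.2.2 ih
  · right
    intro i hi
    have p := hconn x0 hx0 i hi
    clear hi
    induction p with
    | refl => exact h2
    | tail _ hstep ih => exact step2 _ _ hstep.1 hstep.2.1 hstep.2.2.2 ih
end
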